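/- Let g, h : ℕ → ℕ be non-decreasing functions, B a natural number, and Θ a natural number. Define f : ℕ → ℕ by f(x) = B if x ≤ Θ, and f(x) = max(g(x), f(x-1)) + h(x) if x > Θ. Then for all x > Θ, f(x) ≤ max(g(x), B) + (x - Θ - 1) · max(g(x), h(x-1)) + h(x). -/

import Mathlib

/-
Below `x`, monotonicity bounds every `g y` by `g x` and every `h y` by `h (x - 1)`, so each
step of the recurrence from `f Θ = B` up to `f (x - 1)` adds at most `h (x - 1)` on top of
`max (g x) B`; the last step then adds `h x`.
-/

theorem max_recurrence_le_of_bounds {Θ B G c : ℕ} {g h f : ℕ → ℕ} (hbase : f Θ = B) :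
    ∀ k, (∀ y, Θ < y → y ≤ Θ + k → f y = max (g y) (f (y - 1)) + h y) →
      (∀ y, Θ < y → y ≤ Θ + k → g y ≤ G) →
      (∀ y, Θ < y → y ≤ Θ + k → h y ≤ c) →
      f (Θ + k) ≤ max G B + k * c
  | 0, _, _, _ => by simp [hbase]
  | k + 1, hrec, hG, hc => by
    have ih : f (Θ + k) ≤ max G B + k * c :=
      max_recurrence_le_of_bounds hbase k (fun y hy hyk => hrec y hy (by omega))
        (fun y hy hyk => hG y hy (by omega)) (fun y hy hyk => hc y hy (by omega))
    have hstep : max (g (Θ + k + 1)) (f (Θ + k)) ≤ max G B + k * c :=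
      max_le ((hG _ (by omega) le_rfl).trans ((le_max_left G B).trans (Nat.le_add_right _ _)))
        ih
    calc f (Θ + (k + 1))
        = max (g (Θ + k + 1)) (f (Θ + k)) + h (Θ + k + 1) := hrec _ (by omega) le_rfl
      _ ≤ max G B + k * c + c := add_le_add hstep (hc _ (by omega) le_rfl)
      _ = max G B + (k + 1) * c := by ring

theorem max_recurrence_upper_bound (Θ B : ℕ) (g h : ℕ → ℕ)
    (hg : Monotone g) (hh : Monotone h) (f : ℕ → ℕ)
    (hbase : ∀ x, x ≤ Θ → f x = B)
    (hrec : ∀ x, x > Θ → f x = max (g x) (f (x - 1)) + h x) :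
    ∀ x, x > Θ → f x ≤ max (g x) B + (x - Θ - 1) * max (g x) (h (x - 1)) + h x := by
  intro x hx
  obtain ⟨k, rfl⟩ := Nat.exists_eq_add_of_lt hx
  have hbelow : f (Θ + k) ≤ max (g (Θ + k + 1)) B + k * h (Θ + k) :=
    max_recurrence_le_of_bounds (hbase Θ le_rfl) k (fun y hy _ => hrec y hy)
      (fun y _ hyk => hg (by omega)) (fun y _ hyk => hh hyk)
  rw [hrec _ hx, show Θ + k + 1 - 1 = Θ + k by omega, show Θ + k + 1 - Θ - 1 = k by omega]
  gcongr
  calc max (g (Θ + k + 1)) (f (Θ + k))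
      ≤ max (g (Θ + k + 1)) B + k * h (Θ + k) :=
        max_le ((le_max_left _ _).trans (Nat.le_add_right _ _)) hbelow
    _ ≤ max (g (Θ + k + 1)) B + k * max (g (Θ + k + 1)) (h (Θ + k)) := by
        gcongr
        exact le_max_right _ _
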